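/- arXiv:2305.08193 — 7 statements merged into one kernel-verified Lean document; each statement's English description precedes it below -/
import Mathlib

section
/- Suppose M : ℝ^p → ℝ^q is C¹ and for all θ in the ball Θ° = {θ : ‖D₀(θ − θ₀)‖ ≤ r₀} the matrix D(θ)² := ∇M(θ)∇M(θ)ᵀ satisfies D(θ)² ≤ (1+ω)D₀² where D₀² = D(θ₀)² is positive definite. Then for every θ ∈ Θ°, ‖M(θ) − M(θ₀)‖² ≤ (1+ω)‖D₀(θ−θ₀)‖². -/
open Matrix

/-- The `p × q` matrix `∇M(θ)` whose `j`-th column is the gradient of `M_j` at `θ`. -/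
noncomputable def gradMat {p q : ℕ} (M : (Fin p → ℝ) → Fin q → ℝ) (θ : Fin p → ℝ) :
    Matrix (Fin p) (Fin q) ℝ :=
  Matrix.of fun i j => fderiv ℝ (fun t => M t j) θ (Pi.single i 1)

/-- `D(θ)² = ∇M(θ)∇M(θ)ᵀ`. -/
noncomputable def Dmat2 {p q : ℕ} (M : (Fin p → ℝ) → Fin q → ℝ) (θ : Fin p → ℝ) :
    Matrix (Fin p) (Fin p) ℝ :=
  gradMat M θ * (gradMat M θ)ᵀ

/-!
Along the segment `t ↦ θ₀ + t (θ - θ₀)`, which stays in the ellipsoid, the velocity of `M` is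
`∇M(θₜ)ᵀ (θ - θ₀)`, whose squared Euclidean norm is `(θ - θ₀)ᵀ D(θₜ)² (θ - θ₀) ≤ (1+ω)‖D₀(θ - θ₀)‖²`.
The mean value inequality for the Euclidean norm then bounds `‖M(θ) - M(θ₀)‖` by the same quantity.
-/

lemma gradMat_eq_transpose_toMatrix' {p q : ℕ} {M : (Fin p → ℝ) → Fin q → ℝ} {θ : Fin p → ℝ}
    (hM : DifferentiableAt ℝ M θ) :
    gradMat M θ = (LinearMap.toMatrix' (fderiv ℝ M θ : (Fin p → ℝ) →ₗ[ℝ] Fin q → ℝ))ᵀ := by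
  ext i j
  simp [gradMat, fderiv_apply hM j]

lemma dotProduct_Dmat2_mulVec {p q : ℕ} {M : (Fin p → ℝ) → Fin q → ℝ} {θ : Fin p → ℝ}
    (hM : DifferentiableAt ℝ M θ) (v : Fin p → ℝ) :
    v ⬝ᵥ Dmat2 M θ *ᵥ v = ∑ j, (fderiv ℝ M θ v j) ^ 2 := by
  rw [Dmat2, gradMat_eq_transpose_toMatrix' hM, transpose_transpose, ← mulVec_mulVec,
    dotProduct_mulVec, vecMul_transpose, LinearMap.toMatrix'_mulVec]
  simp [dotProduct, sq]

lemma sqrt_smul_dotProduct_mulVec_smul {n : Type*} [Fintype n] (A : Matrix n n ℝ) (t : ℝ)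
    (v : n → ℝ) : √((t • v) ⬝ᵥ A *ᵥ (t • v)) = |t| * √(v ⬝ᵥ A *ᵥ v) := by
  rw [mulVec_smul, smul_dotProduct, dotProduct_smul, smul_eq_mul, smul_eq_mul, ← mul_assoc,
    ← sq, Real.sqrt_mul (sq_nonneg t), Real.sqrt_sq_eq_abs]

lemma sum_sq_sub_le_of_sum_sq_fderiv_le {E ι : Type*} [NormedAddCommGroup E] [NormedSpace ℝ E]
    [Fintype ι] {f : E → ι → ℝ} {x v : E} {C : ℝ}
    (hf : ∀ t ∈ Set.Icc (0 : ℝ) 1, DifferentiableAt ℝ f (x + t • v))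
    (hC : ∀ t ∈ Set.Ico (0 : ℝ) 1, ∑ j, (fderiv ℝ f (x + t • v) v j) ^ 2 ≤ C) :
    ∑ j, (f (x + v) j - f x j) ^ 2 ≤ C := by
  let e := (EuclideanSpace.equiv ι ℝ).symm
  have norm_e : ∀ u, ‖e u‖ ^ 2 = ∑ j, (u j) ^ 2 := fun u => by
    simp [e, EuclideanSpace.norm_sq_eq]
  have hC0 : 0 ≤ C := (Finset.sum_nonneg fun _ _ => sq_nonneg _).trans (hC 0 ⟨le_rfl, one_pos⟩)
  have hderiv : ∀ t ∈ Set.Icc (0 : ℝ) 1, HasDerivWithinAt (fun t : ℝ => e (f (x + t • v)))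
      (e (fderiv ℝ f (x + t • v) v)) (Set.Icc 0 1) t := fun t ht => by
    have hline : HasDerivAt (fun t : ℝ => x + t • v) v t := by
      simpa using ((hasDerivAt_id t).smul_const v).const_add x
    exact (e.hasFDerivAt.comp_hasDerivAt t
      ((hf t ht).hasFDerivAt.comp_hasDerivAt t hline)).hasDerivWithinAt
  have hmvt := norm_image_sub_le_of_norm_deriv_le_segment_01' hderiv fun t ht =>
    (Real.le_sqrt (norm_nonneg _) hC0).2 ((norm_e _).trans_le (hC t ht))
  simp only [zero_smul, add_zero, one_smul, ← map_sub] at hmvt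
  rw [← norm_e]
  exact (Real.le_sqrt (norm_nonneg _) hC0).1 hmvt

theorem stmt2_general {p q : ℕ} (M : (Fin p → ℝ) → Fin q → ℝ) (θ₀ : Fin p → ℝ)
    (r₀ ω : ℝ)
    (hM : ContDiff ℝ 1 M)
    (hub : ∀ θ : Fin p → ℝ,
      Real.sqrt ((θ - θ₀) ⬝ᵥ (Dmat2 M θ₀).mulVec (θ - θ₀)) ≤ r₀ →
      ((1 + ω) • Dmat2 M θ₀ - Dmat2 M θ).PosSemidef) :
    ∀ θ : Fin p → ℝ,
      Real.sqrt ((θ - θ₀) ⬝ᵥ (Dmat2 M θ₀).mulVec (θ - θ₀)) ≤ r₀ →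
      ∑ j, (M θ j - M θ₀ j) ^ 2
        ≤ (1 + ω) * ((θ - θ₀) ⬝ᵥ (Dmat2 M θ₀).mulVec (θ - θ₀)) := by
  intro θ hθ
  have hdiff : Differentiable ℝ M := hM.differentiable one_ne_zero
  have hseg : ∀ t ∈ Set.Ico (0 : ℝ) 1,
      √((θ₀ + t • (θ - θ₀) - θ₀) ⬝ᵥ Dmat2 M θ₀ *ᵥ (θ₀ + t • (θ - θ₀) - θ₀)) ≤ r₀ := by
    intro t ⟨ht0, ht1⟩
    rw [add_sub_cancel_left, sqrt_smul_dotProduct_mulVec_smul, abs_of_nonneg ht0]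
    exact (mul_le_of_le_one_left (Real.sqrt_nonneg _) ht1.le).trans hθ
  have hderiv : ∀ t ∈ Set.Ico (0 : ℝ) 1, ∑ j, (fderiv ℝ M (θ₀ + t • (θ - θ₀)) (θ - θ₀) j) ^ 2
      ≤ (1 + ω) * ((θ - θ₀) ⬝ᵥ Dmat2 M θ₀ *ᵥ (θ - θ₀)) := by
    intro t ht
    have hpsd := (hub _ (hseg t ht)).dotProduct_mulVec_nonneg (θ - θ₀)
    rwa [star_trivial, sub_mulVec, dotProduct_sub, smul_mulVec, dotProduct_smul, smul_eq_mul,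
      sub_nonneg, dotProduct_Dmat2_mulVec (hdiff _)] at hpsd
  simpa only [add_sub_cancel] using
    sum_sq_sub_le_of_sum_sq_fderiv_le (fun t _ => hdiff _) hderiv

/-- if `D(θ)² ≤ (1+ω) D₀²` on the ellipsoid
`Θ° = {θ : ‖D₀(θ−θ₀)‖ ≤ r₀}` (where `D₀² = D(θ₀)²` is positive definite and
`‖D₀ v‖² = vᵀ D₀² v`), then `‖M(θ) − M(θ₀)‖² ≤ (1+ω)‖D₀(θ−θ₀)‖²` for all `θ ∈ Θ°`. -/
theorem stmt2 {p q : ℕ} (M : (Fin p → ℝ) → Fin q → ℝ) (θ₀ : Fin p → ℝ)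
    (r₀ ω : ℝ) (hr : 0 ≤ r₀) (hω : 0 ≤ ω)
    (hM : ContDiff ℝ 1 M)
    (hpd : (Dmat2 M θ₀).PosDef)
    (hub : ∀ θ : Fin p → ℝ,
      Real.sqrt ((θ - θ₀) ⬝ᵥ (Dmat2 M θ₀).mulVec (θ - θ₀)) ≤ r₀ →
      ((1 + ω) • Dmat2 M θ₀ - Dmat2 M θ).PosSemidef) :
    ∀ θ : Fin p → ℝ,
      Real.sqrt ((θ - θ₀) ⬝ᵥ (Dmat2 M θ₀).mulVec (θ - θ₀)) ≤ r₀ →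
      ∑ j, (M θ j - M θ₀ j) ^ 2
        ≤ (1 + ω) * ((θ - θ₀) ⬝ᵥ (Dmat2 M θ₀).mulVec (θ - θ₀)) :=
  stmt2_general M θ₀ r₀ ω hM hub
end

section
/- Let M : ℝ^p → ℝ^q be C² and suppose for all θ ∈ Θ° and u ∈ ℝ^p: Σ_j ⟨∇²M_j(θ), u⊗u⟩² ≤ τ²‖D(θ)u‖⁴, where D(θ)² = ∇M(θ)∇M(θ)ᵀ. If ‖M(θ) − η‖ ≤ 2r₀ and 2r₀τ = ρ, then |Σ_j (M_j(θ) − η_j)⟨∇²M_j(θ), u⊗u⟩| ≤ ρ‖D(θ)u‖² for all u; consequently, with H(θ,η) := D(θ)² + Σ_j(M_j(θ)−η_j)∇²M_j(θ) + G², one has −ρD(θ)² ≤ H(θ,η) − (D(θ)² + G²) ≤ ρD(θ)² in the Loewner order. -/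
/-!
By Cauchy–Schwarz over `j`, using `‖M(θ) − η‖ ≤ 2r₀` and the tensor bound, the quadratic form of
`Σ_j (M_j(θ) − η_j) ∇²M_j(θ)` at `u` is at most `ρ‖D(θ)u‖²` in absolute value. The two Loewner
inequalities are the two sides of this bound, the `G²` terms cancelling.
-/

open Matrix

/-- The Hessian matrix `∇²M_j(θ)`. -/
noncomputable def hessMat {p q : ℕ} (M : (Fin p → ℝ) → Fin q → ℝ) (θ : Fin p → ℝ)
    (j : Fin q) : Matrix (Fin p) (Fin p) ℝ :=
  Matrix.of fun i k =>
    iteratedFDeriv ℝ 2 (fun t => M t j) θ ![Pi.single i 1, Pi.single k 1]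

/-- `H(θ,η) := D(θ)² + Σ_j (M_j(θ) − η_j) ∇²M_j(θ) + G²`. -/
noncomputable def Hmat {p q : ℕ} (M : (Fin p → ℝ) → Fin q → ℝ) (θ : Fin p → ℝ)
    (η : Fin q → ℝ) (G2 : Matrix (Fin p) (Fin p) ℝ) : Matrix (Fin p) (Fin p) ℝ :=
  Dmat2 M θ + (∑ j, (M θ j - η j) • hessMat M θ j) + G2

theorem Matrix.posSemidef_sub_and_add_of_abs_dotProduct_mulVec_le {n : Type*} [Fintype n]
    {S D : Matrix n n ℝ} (hS : S.IsHermitian) (hD : D.IsHermitian)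
    (h : ∀ x, |x ⬝ᵥ S *ᵥ x| ≤ x ⬝ᵥ D *ᵥ x) : (D - S).PosSemidef ∧ (S + D).PosSemidef := by
  refine ⟨.of_dotProduct_mulVec_nonneg (hD.sub hS) fun x => ?_,
    .of_dotProduct_mulVec_nonneg (hS.add hD) fun x => ?_⟩ <;>
  · have := abs_le.mp (h x)
    simp only [star_trivial, sub_mulVec, add_mulVec, dotProduct_sub, dotProduct_add]
    linarith

theorem abs_sum_mul_le_of_sum_sq_le {ι : Type*} (s : Finset ι) {c h : ι → ℝ} {a b : ℝ}
    (ha : 0 ≤ a) (hb : 0 ≤ b) (hc : ∑ i ∈ s, c i ^ 2 ≤ a ^ 2) (hh : ∑ i ∈ s, h i ^ 2 ≤ b ^ 2) :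
    |∑ i ∈ s, c i * h i| ≤ a * b := by
  refine abs_le_of_sq_le_sq ?_ (mul_nonneg ha hb)
  calc (∑ i ∈ s, c i * h i) ^ 2 ≤ (∑ i ∈ s, c i ^ 2) * ∑ i ∈ s, h i ^ 2 :=
        Finset.sum_mul_sq_le_sq_mul_sq s c h
    _ ≤ a ^ 2 * b ^ 2 := mul_le_mul hc hh (Finset.sum_nonneg fun i _ => sq_nonneg _) (sq_nonneg a)
    _ = (a * b) ^ 2 := (mul_pow a b 2).symm

section Hessian

variable {p q : ℕ} (M : (Fin p → ℝ) → Fin q → ℝ) (θ : Fin p → ℝ)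

theorem hessMat_eq_toMatrix₂' (j : Fin q) :
    hessMat M θ j =
      LinearMap.toMatrix₂' ℝ (fderiv ℝ (fderiv ℝ fun s => M s j) θ).toLinearMap₁₂ := by
  ext i k
  simp [hessMat, iteratedFDeriv_two_apply]

theorem dotProduct_hessMat_mulVec (j : Fin q) (u : Fin p → ℝ) :
    u ⬝ᵥ hessMat M θ j *ᵥ u = iteratedFDeriv ℝ 2 (fun s => M s j) θ ![u, u] := by
  rw [hessMat_eq_toMatrix₂', ← Matrix.toLinearMap₂'_apply', Matrix.toLinearMap₂'_toMatrix',
    iteratedFDeriv_two_apply]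
  rfl

theorem dotProduct_sum_smul_hessMat_mulVec (c : Fin q → ℝ) (u : Fin p → ℝ) :
    u ⬝ᵥ (∑ j, c j • hessMat M θ j) *ᵥ u =
      ∑ j, c j * iteratedFDeriv ℝ 2 (fun s => M s j) θ ![u, u] := by
  simp only [sum_mulVec, dotProduct_sum, smul_mulVec, dotProduct_smul, smul_eq_mul,
    dotProduct_hessMat_mulVec]

theorem isHermitian_hessMat {M : (Fin p → ℝ) → Fin q → ℝ} (hM : ContDiff ℝ 2 M) (j : Fin q) :
    (hessMat M θ j).IsHermitian := by
  have hMj : ContDiff ℝ 2 fun s => M s j := contDiff_apply ℝ ℝ j |>.comp hM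
  ext i k
  simpa [hessMat, iteratedFDeriv_two_apply] using
    hMj.contDiffAt.isSymmSndFDerivAt (by simp) (Pi.single k 1) (Pi.single i 1)

theorem isHermitian_sum_smul_hessMat {M : (Fin p → ℝ) → Fin q → ℝ} (hM : ContDiff ℝ 2 M)
    (c : Fin q → ℝ) : (∑ j, c j • hessMat M θ j).IsHermitian :=
  isSelfAdjoint_sum (R := Matrix (Fin p) (Fin p) ℝ) Finset.univ fun j _ =>
    (isHermitian_hessMat θ hM j).smul (IsSelfAdjoint.all (c j))

theorem posSemidef_Dmat2 : (Dmat2 M θ).PosSemidef := by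
  simpa [Dmat2] using posSemidef_self_mul_conjTranspose (gradMat M θ)

theorem Hmat_sub (η : Fin q → ℝ) (G2 : Matrix (Fin p) (Fin p) ℝ) :
    Hmat M θ η G2 - (Dmat2 M θ + G2) = ∑ j, (M θ j - η j) • hessMat M θ j := by
  rw [Hmat]
  abel

end Hessian

theorem stmt3_general {p q : ℕ} (M : (Fin p → ℝ) → Fin q → ℝ)
    (G2 : Matrix (Fin p) (Fin p) ℝ) (Θ : Set (Fin p → ℝ))
    (τ r₀ ρ : ℝ) (θ : Fin p → ℝ) (η : Fin q → ℝ)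
    (hM : ContDiff ℝ 2 M) (hτ : 0 ≤ τ) (hρ : ρ = 2 * r₀ * τ)
    (hθ : θ ∈ Θ)
    (hk2 : ∀ t ∈ Θ, ∀ u : Fin p → ℝ,
      ∑ j, (iteratedFDeriv ℝ 2 (fun s => M s j) t ![u, u]) ^ 2
        ≤ τ ^ 2 * (u ⬝ᵥ (Dmat2 M t).mulVec u) ^ 2)
    (hη : Real.sqrt ((M θ - η) ⬝ᵥ (M θ - η)) ≤ 2 * r₀) :
    (∀ u : Fin p → ℝ,
      |∑ j, (M θ j - η j) * iteratedFDeriv ℝ 2 (fun s => M s j) θ ![u, u]|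
        ≤ ρ * (u ⬝ᵥ (Dmat2 M θ).mulVec u)) ∧
    (ρ • Dmat2 M θ - (Hmat M θ η G2 - (Dmat2 M θ + G2))).PosSemidef ∧
    ((Hmat M θ η G2 - (Dmat2 M θ + G2)) + ρ • Dmat2 M θ).PosSemidef := by
  obtain ⟨hr₀, hdist⟩ := Real.sqrt_le_iff.mp hη
  have hD := posSemidef_Dmat2 M θ
  have hbound : ∀ u : Fin p → ℝ,
      |∑ j, (M θ j - η j) * iteratedFDeriv ℝ 2 (fun s => M s j) θ ![u, u]|
        ≤ ρ * (u ⬝ᵥ (Dmat2 M θ).mulVec u) := fun u => by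
    have hQ : 0 ≤ u ⬝ᵥ (Dmat2 M θ).mulVec u := by simpa using hD.dotProduct_mulVec_nonneg u
    rw [hρ, mul_assoc]
    refine abs_sum_mul_le_of_sum_sq_le _ hr₀ (mul_nonneg hτ hQ) ?_ ((hk2 θ hθ u).trans_eq ?_)
    · simpa [dotProduct, sq] using hdist
    · ring
  refine ⟨hbound, ?_⟩
  rw [Hmat_sub]
  refine posSemidef_sub_and_add_of_abs_dotProduct_mulVec_le
    (isHermitian_sum_smul_hessMat θ hM _)
    ((hD.smul (hρ ▸ by positivity)).isHermitian) fun x => ?_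
  simpa [dotProduct_sum_smul_hessMat_mulVec, smul_mulVec] using hbound x

/-- under the second-order tensor bound on `Θ°` and `‖M(θ) − η‖ ≤ 2r₀`
with `ρ = 2r₀τ`, one has `|Σ_j (M_j(θ)−η_j)⟨∇²M_j(θ),u⊗u⟩| ≤ ρ‖D(θ)u‖²` for all `u`,
and consequently `−ρD(θ)² ≤ H(θ,η) − (D(θ)² + G²) ≤ ρD(θ)²` in the Loewner order. -/
theorem stmt3 {p q : ℕ} (M : (Fin p → ℝ) → Fin q → ℝ)
    (G2 : Matrix (Fin p) (Fin p) ℝ) (Θ : Set (Fin p → ℝ))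
    (τ r₀ ρ : ℝ) (θ : Fin p → ℝ) (η : Fin q → ℝ)
    (hM : ContDiff ℝ 2 M) (hτ : 0 ≤ τ) (hr : 0 ≤ r₀) (hρ : ρ = 2 * r₀ * τ)
    (hG : G2.PosSemidef) (hθ : θ ∈ Θ)
    (hk2 : ∀ t ∈ Θ, ∀ u : Fin p → ℝ,
      ∑ j, (iteratedFDeriv ℝ 2 (fun s => M s j) t ![u, u]) ^ 2
        ≤ τ ^ 2 * (u ⬝ᵥ (Dmat2 M t).mulVec u) ^ 2)
    (hη : Real.sqrt ((M θ - η) ⬝ᵥ (M θ - η)) ≤ 2 * r₀) :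
    (∀ u : Fin p → ℝ,
      |∑ j, (M θ j - η j) * iteratedFDeriv ℝ 2 (fun s => M s j) θ ![u, u]|
        ≤ ρ * (u ⬝ᵥ (Dmat2 M θ).mulVec u)) ∧
    (ρ • Dmat2 M θ - (Hmat M θ η G2 - (Dmat2 M θ + G2))).PosSemidef ∧
    ((Hmat M θ η G2 - (Dmat2 M θ + G2)) + ρ • Dmat2 M θ).PosSemidef :=
  stmt3_general M G2 Θ τ r₀ ρ θ η hM hτ hρ hθ hk2 hη
end

section
/- Let A be a p×q real matrix, B a p×p symmetric matrix with (1−ρ)(AAᵀ + G²) ≤ B for 0 ≤ ρ < 1/2, where G² ⪰ 0 and AAᵀ + G² ≻ 0. Consider the block matrix F = [[B, A],[Aᵀ, 2I_q]]. Then F is positive definite, its θθ-block of the inverse satisfies (F⁻¹)_{θθ} ≤ (2/(1−2ρ)) (AAᵀ+G²)⁻¹, and its ηη-block satisfies (F⁻¹)_{ηη} ≤ ((1−ρ)/(1−2ρ)) I_q. -/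
/-!
Write `D = AAᵀ + G²` and use the Loewner order. Since `G² ⪰ 0` we have `AAᵀ ⪯ D`, and the two
Schur complements of `F` are bounded below by multiples of `D` and of `I_q`:
`B - ½AAᵀ = ((1-2ρ)/2) D + (B - (1-ρ)D) + ½G² ⪰ ((1-2ρ)/2) D`, and, because inversion is
antitone and `Aᵀ D⁻¹ A ⪯ I_q`, also `Aᵀ B⁻¹ A ⪯ (1-ρ)⁻¹ Aᵀ D⁻¹ A ⪯ (1-ρ)⁻¹ I_q`, whence
`2I_q - Aᵀ B⁻¹ A ⪰ ((1-2ρ)/(1-ρ)) I_q`. Both complements are thus positive definite, which makes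
`F` positive definite, and inverting these lower bounds bounds the diagonal blocks of `F⁻¹`.
-/

open Matrix
open scoped MatrixOrder ComplexOrder

namespace Matrix

lemma inv_smul_of_ne_zero {K n : Type*} [Field K] [Fintype n] [DecidableEq n] {c : K}
    (hc : c ≠ 0) (M : Matrix n n K) : (c • M)⁻¹ = c⁻¹ • M⁻¹ := by
  by_cases hM : IsUnit M.det
  · simpa [Units.smul_def] using inv_smul' M (Units.mk0 c hc) hM
  · have hcM : ¬IsUnit (c • M).det := by simpa [det_smul, hc] using hM
    rw [nonsing_inv_apply_not_isUnit _ hM, nonsing_inv_apply_not_isUnit _ hcM, smul_zero]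

section Loewner

variable {𝕜 m n : Type*} [RCLike 𝕜]

lemma PosDef.of_le {M N : Matrix n n 𝕜} (hM : M.PosDef) (h : M ≤ N) : N.PosDef := by
  simpa using hM.add_posSemidef h

variable [Fintype m] [Fintype n]

lemma conjTranspose_mul_mul_le_conjTranspose_mul_mul {X Y : Matrix m m 𝕜} (h : X ≤ Y)
    (A : Matrix m n 𝕜) : Aᴴ * X * A ≤ Aᴴ * Y * A := by
  rw [le_iff, ← Matrix.sub_mul, ← Matrix.mul_sub]
  exact h.conjTranspose_mul_mul_same A

variable [DecidableEq m] [DecidableEq n]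

lemma PosDef.inv_anti {M N : Matrix n n 𝕜} (hM : M.PosDef) (h : M ≤ N) : N⁻¹ ≤ M⁻¹ := by
  have hN := hM.of_le h
  have hMu := (isUnit_iff_isUnit_det M).mp hM.isUnit
  have hNu := (isUnit_iff_isUnit_det N).mp hN.isUnit
  have key : M⁻¹ - N⁻¹ =
      ((N - M) * N⁻¹)ᴴ * M⁻¹ * ((N - M) * N⁻¹) + N⁻¹ᴴ * (N - M) * N⁻¹ := by
    rw [conjTranspose_mul, h.1.eq, hN.1.inv.eq]
    calc M⁻¹ - N⁻¹ = M⁻¹ * (N - M) * N⁻¹ := by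
          simp only [Matrix.mul_sub, Matrix.sub_mul, Matrix.mul_assoc, mul_nonsing_inv _ hNu,
            nonsing_inv_mul_cancel_left _ _ hMu, Matrix.mul_one]
      _ = (N⁻¹ * (N - M) * M⁻¹ + N⁻¹) * (N - M) * N⁻¹ := by
          congr 2
          simp only [Matrix.mul_sub, Matrix.sub_mul, nonsing_inv_mul _ hNu, Matrix.one_mul,
            Matrix.mul_assoc, mul_nonsing_inv _ hMu, Matrix.mul_one, sub_add_cancel]
      _ = _ := by simp only [Matrix.add_mul, Matrix.mul_assoc]
  rw [le_iff, key]
  exact (hM.inv.posSemidef.conjTranspose_mul_mul_same _).add (h.conjTranspose_mul_mul_same _)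

lemma conjTranspose_mul_inv_mul_le_one (A : Matrix m n 𝕜) {D : Matrix m m 𝕜} (hD : D.PosDef)
    (hAD : A * Aᴴ ≤ D) : Aᴴ * D⁻¹ * A ≤ 1 := by
  have hDu := (isUnit_iff_isUnit_det D).mp hD.isUnit
  have hK : (1 - Aᴴ * D⁻¹ * A)ᴴ = 1 - Aᴴ * D⁻¹ * A := by
    simp only [conjTranspose_sub, conjTranspose_one, conjTranspose_mul,
      conjTranspose_conjTranspose, hD.1.inv.eq, Matrix.mul_assoc]
  have key : 1 - Aᴴ * D⁻¹ * A = (1 - Aᴴ * D⁻¹ * A)ᴴ * (1 - Aᴴ * D⁻¹ * A) +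
      (D⁻¹ * A)ᴴ * (D - A * Aᴴ) * (D⁻¹ * A) := by
    rw [hK, conjTranspose_mul, hD.1.inv.eq]
    simp only [Matrix.mul_sub, Matrix.sub_mul, Matrix.mul_one, Matrix.one_mul, Matrix.mul_assoc]
    rw [Matrix.mul_nonsing_inv_cancel_left _ _ hDu]
    abel
  rw [le_iff, key]
  exact (posSemidef_conjTranspose_mul_self _).add (hAD.conjTranspose_mul_mul_same _)

lemma PosDef.fromBlocks_of_schur₂₂ {A : Matrix m m 𝕜} {B : Matrix m n 𝕜} {D : Matrix n n 𝕜}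
    (hD : D.PosDef) (hS : (A - B * D⁻¹ * Bᴴ).PosDef) : (fromBlocks A B Bᴴ D).PosDef := by
  let := hD.isUnit.invertible
  let : Invertible (A - B * ⅟D * Bᴴ) := by rw [invOf_eq_nonsing_inv]; exact hS.isUnit.invertible
  let := fromBlocks₂₂Invertible A B Bᴴ D
  exact ((PosDef.fromBlocks₂₂ A B hD).2 hS.posSemidef).posDef_iff_isUnit.2 (isUnit_of_invertible _)

end Loewner

section BlockInverse

variable {α m n : Type*} [CommRing α] [Fintype m] [Fintype n] [DecidableEq m] [DecidableEq n]
  {A : Matrix m m α} {B : Matrix m n α} {C : Matrix n m α} {D : Matrix n n α}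

lemma toBlocks₁₁_inv_fromBlocks (hD : IsUnit D) (hS : IsUnit (A - B * D⁻¹ * C)) :
    (fromBlocks A B C D)⁻¹.toBlocks₁₁ = (A - B * D⁻¹ * C)⁻¹ := by
  let := hD.invertible
  let : Invertible (A - B * ⅟D * C) := by rw [invOf_eq_nonsing_inv]; exact hS.invertible
  let := fromBlocks₂₂Invertible A B C D
  rw [← invOf_eq_nonsing_inv, invOf_fromBlocks₂₂_eq, toBlocks_fromBlocks₁₁, invOf_eq_nonsing_inv,
    invOf_eq_nonsing_inv]

lemma toBlocks₂₂_inv_fromBlocks (hA : IsUnit A) (hS : IsUnit (D - C * A⁻¹ * B)) :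
    (fromBlocks A B C D)⁻¹.toBlocks₂₂ = (D - C * A⁻¹ * B)⁻¹ := by
  let := hA.invertible
  let : Invertible (D - C * ⅟A * B) := by rw [invOf_eq_nonsing_inv]; exact hS.invertible
  let := fromBlocks₁₁Invertible A B C D
  rw [← invOf_eq_nonsing_inv, invOf_fromBlocks₁₁_eq, toBlocks_fromBlocks₂₂, invOf_eq_nonsing_inv,
    invOf_eq_nonsing_inv]

end BlockInverse

end Matrix

section SchurComplements

variable {m n : Type*} [Fintype m] [Fintype n] [DecidableEq m] [DecidableEq n]
  (A : Matrix m n ℝ) {B D : Matrix m m ℝ} {ρ : ℝ}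

lemma smul_le_schur₁₁ (hAD : A * Aᵀ ≤ D) (hB : (1 - ρ) • D ≤ B) :
    ((1 - 2 * ρ) / 2) • D ≤ B - A * ((2 : ℝ) • (1 : Matrix n n ℝ))⁻¹ * Aᵀ := by
  have h : B - A * ((2 : ℝ) • (1 : Matrix n n ℝ))⁻¹ * Aᵀ =
      ((1 - 2 * ρ) / 2) • D + ((B - (1 - ρ) • D) + (2 : ℝ)⁻¹ • (D - A * Aᵀ)) := by
    rw [inv_smul_of_ne_zero two_ne_zero, inv_one, Matrix.mul_smul, Matrix.mul_one, Matrix.smul_mul]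
    module
  rw [h]
  exact le_add_of_nonneg_right <|
    add_nonneg (sub_nonneg.2 hB) (smul_nonneg (by norm_num) (sub_nonneg.2 hAD))

lemma smul_one_le_schur₂₂ (hρ : ρ < 1) (hD : D.PosDef) (hAD : A * Aᵀ ≤ D)
    (hB : (1 - ρ) • D ≤ B) :
    ((1 - 2 * ρ) / (1 - ρ)) • (1 : Matrix n n ℝ) ≤ (2 : ℝ) • 1 - Aᵀ * B⁻¹ * A := by
  have hc : 0 < 1 - ρ := by linarith
  have hBinv : B⁻¹ ≤ (1 - ρ)⁻¹ • D⁻¹ := by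
    have := (hD.smul hc).inv_anti hB
    rwa [inv_smul_of_ne_zero hc.ne'] at this
  have hproj : Aᵀ * D⁻¹ * A ≤ 1 := by
    simpa only [conjTranspose_eq_transpose_of_trivial] using
      conjTranspose_mul_inv_mul_le_one A hD (by rwa [conjTranspose_eq_transpose_of_trivial])
  have hquad : Aᵀ * B⁻¹ * A ≤ (1 - ρ)⁻¹ • (1 : Matrix n n ℝ) :=
    calc Aᵀ * B⁻¹ * A ≤ Aᵀ * ((1 - ρ)⁻¹ • D⁻¹) * A := by
          simpa only [conjTranspose_eq_transpose_of_trivial] using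
            conjTranspose_mul_mul_le_conjTranspose_mul_mul hBinv A
      _ = (1 - ρ)⁻¹ • (Aᵀ * D⁻¹ * A) := by rw [Matrix.mul_smul, Matrix.smul_mul]
      _ ≤ (1 - ρ)⁻¹ • 1 := smul_le_smul_of_nonneg_left hproj (inv_nonneg.2 hc.le)
  rw [le_sub_comm, ← sub_smul]
  convert hquad using 2
  field_simp
  ring

end SchurComplements

theorem stmt4_general {p q : ℕ} (A : Matrix (Fin p) (Fin q) ℝ)
    (B G2 : Matrix (Fin p) (Fin p) ℝ) (ρ : ℝ)
    (hρ : ρ < 1 / 2) (hG : G2.PosSemidef)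
    (hD : (A * Aᵀ + G2).PosDef)
    (hlow : (B - (1 - ρ) • (A * Aᵀ + G2)).PosSemidef) :
    (Matrix.fromBlocks B A Aᵀ ((2:ℝ) • (1 : Matrix (Fin q) (Fin q) ℝ))).PosDef ∧
    ((2 / (1 - 2 * ρ)) • (A * Aᵀ + G2)⁻¹ -
      ((Matrix.fromBlocks B A Aᵀ ((2:ℝ) • (1 : Matrix (Fin q) (Fin q) ℝ)))⁻¹).toBlocks₁₁
      ).PosSemidef ∧
    (((1 - ρ) / (1 - 2 * ρ)) • (1 : Matrix (Fin q) (Fin q) ℝ) -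
      ((Matrix.fromBlocks B A Aᵀ ((2:ℝ) • (1 : Matrix (Fin q) (Fin q) ℝ)))⁻¹).toBlocks₂₂
      ).PosSemidef := by
  have hε : 0 < 1 - 2 * ρ := by linarith
  have hc : 0 < 1 - ρ := by linarith
  have hAD : A * Aᵀ ≤ A * Aᵀ + G2 := le_add_of_nonneg_right (nonneg_iff_posSemidef.2 hG)
  have hS := smul_le_schur₁₁ A hAD hlow
  have hT := smul_one_le_schur₂₂ A (by linarith) hD hAD hlow
  have hε2 : 0 < (1 - 2 * ρ) / 2 := by positivity
  have hεc : 0 < (1 - 2 * ρ) / (1 - ρ) := by positivity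
  have hSpd := (hD.smul hε2).of_le hS
  have hTpd := (PosDef.one.smul hεc).of_le hT
  have hI2 : ((2 : ℝ) • (1 : Matrix (Fin q) (Fin q) ℝ)).PosDef := PosDef.one.smul two_pos
  have hBpd := (hD.smul hc).of_le hlow
  refine ⟨?_, ?_, ?_⟩
  · rw [← conjTranspose_eq_transpose_of_trivial] at hSpd ⊢
    exact PosDef.fromBlocks_of_schur₂₂ hI2 hSpd
  · rw [toBlocks₁₁_inv_fromBlocks hI2.isUnit hSpd.isUnit, ← le_iff]
    simpa only [inv_smul_of_ne_zero hε2.ne', inv_div] using (hD.smul hε2).inv_anti hS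
  · rw [toBlocks₂₂_inv_fromBlocks hBpd.isUnit hTpd.isUnit, ← le_iff]
    simpa only [inv_smul_of_ne_zero hεc.ne', inv_div, inv_one] using (PosDef.one.smul hεc).inv_anti hT

/-- for `F = [[B, A],[Aᵀ, 2I_q]]` with `B ⪰ (1−ρ)(AAᵀ+G²)`, `0 ≤ ρ < 1/2`,
`G² ⪰ 0`, `AAᵀ+G² ≻ 0`, the matrix `F` is positive definite,
`(F⁻¹)_{θθ} ⪯ (2/(1−2ρ))(AAᵀ+G²)⁻¹` and `(F⁻¹)_{ηη} ⪯ ((1−ρ)/(1−2ρ)) I_q`. -/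
theorem stmt4 {p q : ℕ} (A : Matrix (Fin p) (Fin q) ℝ)
    (B G2 : Matrix (Fin p) (Fin p) ℝ) (ρ : ℝ)
    (hρ0 : 0 ≤ ρ) (hρ : ρ < 1 / 2) (hB : B.IsSymm) (hG : G2.PosSemidef)
    (hD : (A * Aᵀ + G2).PosDef)
    (hlow : (B - (1 - ρ) • (A * Aᵀ + G2)).PosSemidef) :
    (Matrix.fromBlocks B A Aᵀ ((2:ℝ) • (1 : Matrix (Fin q) (Fin q) ℝ))).PosDef ∧
    ((2 / (1 - 2 * ρ)) • (A * Aᵀ + G2)⁻¹ -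
      ((Matrix.fromBlocks B A Aᵀ ((2:ℝ) • (1 : Matrix (Fin q) (Fin q) ℝ)))⁻¹).toBlocks₁₁
      ).PosSemidef ∧
    (((1 - ρ) / (1 - 2 * ρ)) • (1 : Matrix (Fin q) (Fin q) ℝ) -
      ((Matrix.fromBlocks B A Aᵀ ((2:ℝ) • (1 : Matrix (Fin q) (Fin q) ℝ)))⁻¹).toBlocks₂₂
      ).PosSemidef :=
  stmt4_general A B G2 ρ hρ hG hD hlow
end

section
/- Let F = [[B, A],[Aᵀ, 2I_q]] be positive definite with B ⪰ (1−ρ)(AAᵀ+G²), AAᵀ+G² ≻ 0, 0 ≤ ρ < 1/2. If a vector w = (u, s) ∈ ℝ^p × ℝ^q satisfies ‖F^{1/2} w‖ ≤ r, then ‖(AAᵀ+G²)^{1/2} u‖² ≤ 2r²/(1−2ρ) and ‖s‖² ≤ (1−ρ)r²/(1−2ρ). -/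
/-!
Write `D = AAᵀ + G²`, `a = Aᵀu` and `Q = wᵀFw = uᵀBu + 2⟪a, s⟫ + 2‖s‖² ≤ r²`. Since `G² ⪰ 0`,
`‖a‖² ≤ uᵀDu`, and `uᵀBu ≥ (1 - ρ) uᵀDu`. Completing the square with `‖a + 2s‖² ≥ 0` absorbs
the cross term into `-‖a‖²/2`, which leaves `Q ≥ (1/2 - ρ) uᵀDu`; completing it with
`‖(1 - ρ)a + s‖² ≥ 0` instead absorbs it into `-(1 - ρ)‖a‖² - ‖s‖²/(1 - ρ)`, which leaves
`(1 - ρ) Q ≥ (1 - 2ρ)‖s‖²`.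
-/

open Matrix

section BlockQuadraticForm

variable {m n R : Type*} [Fintype m] [Fintype n] [CommRing R]

theorem dotProduct_mul_transpose_mulVec (A : Matrix m n R) (u : m → R) :
    u ⬝ᵥ (A * Aᵀ) *ᵥ u = Aᵀ *ᵥ u ⬝ᵥ Aᵀ *ᵥ u := by
  rw [← mulVec_mulVec, dotProduct_mulVec, mulVec_transpose]

theorem sumElim_dotProduct_fromBlocks_transpose_mulVec [DecidableEq n]
    (B : Matrix m m R) (A : Matrix m n R) (c : R) (u : m → R) (s : n → R) :
    Sum.elim u s ⬝ᵥ fromBlocks B A Aᵀ (c • 1) *ᵥ Sum.elim u s =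
      u ⬝ᵥ B *ᵥ u + 2 * (Aᵀ *ᵥ u ⬝ᵥ s) + c * (s ⬝ᵥ s) := by
  rw [fromBlocks_mulVec, sumElim_dotProduct_sumElim, Sum.elim_comp_inl, Sum.elim_comp_inr,
    dotProduct_add, dotProduct_add, dotProduct_mulVec u A, ← mulVec_transpose,
    smul_mulVec, one_mulVec, dotProduct_smul, smul_eq_mul, dotProduct_comm s]
  ring

end BlockQuadraticForm

section CompletingTheSquare

variable {n : Type*} [Fintype n] {a s : n → ℝ} {b d ρ : ℝ}

theorem mul_le_two_mul_of_dotProduct_self_le (ha : a ⬝ᵥ a ≤ d) (hb : (1 - ρ) * d ≤ b) :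
    (1 - 2 * ρ) * d ≤ 2 * (b + 2 * (a ⬝ᵥ s) + 2 * (s ⬝ᵥ s)) := by
  have hsq : 0 ≤ (a + (2 : ℝ) • s) ⬝ᵥ (a + (2 : ℝ) • s) := dotProduct_self_star_nonneg _
  simp only [dotProduct_add, add_dotProduct, smul_dotProduct, dotProduct_smul, smul_eq_mul,
    dotProduct_comm s a] at hsq
  linarith

theorem mul_dotProduct_self_le_of_dotProduct_self_le (hρ : ρ < 1 / 2) (ha : a ⬝ᵥ a ≤ d)
    (hb : (1 - ρ) * d ≤ b) :
    (1 - 2 * ρ) * (s ⬝ᵥ s) ≤ (1 - ρ) * (b + 2 * (a ⬝ᵥ s) + 2 * (s ⬝ᵥ s)) := by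
  have hsq : 0 ≤ ((1 - ρ) • a + s) ⬝ᵥ ((1 - ρ) • a + s) := dotProduct_self_star_nonneg _
  simp only [dotProduct_add, add_dotProduct, smul_dotProduct, dotProduct_smul, smul_eq_mul,
    dotProduct_comm s a] at hsq
  nlinarith [mul_le_mul_of_nonneg_left ha (by linarith : (0 : ℝ) ≤ 1 - ρ)]

end CompletingTheSquare

theorem stmt6_general {p q : ℕ} (A : Matrix (Fin p) (Fin q) ℝ)
    (B G2 : Matrix (Fin p) (Fin p) ℝ) (ρ r : ℝ)
    (u : Fin p → ℝ) (s : Fin q → ℝ)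
    (hρ : ρ < 1 / 2) (hG : G2.PosSemidef)
    (hB : (B - (1 - ρ) • (A * Aᵀ + G2)).PosSemidef)
    (hw : Real.sqrt (Sum.elim u s ⬝ᵥ
        (Matrix.fromBlocks B A Aᵀ ((2:ℝ) • (1 : Matrix (Fin q) (Fin q) ℝ))).mulVec
          (Sum.elim u s)) ≤ r) :
    u ⬝ᵥ (A * Aᵀ + G2).mulVec u ≤ 2 * r ^ 2 / (1 - 2 * ρ) ∧
    s ⬝ᵥ s ≤ (1 - ρ) * r ^ 2 / (1 - 2 * ρ) := by
  have hQ := (Real.sqrt_le_iff.mp hw).2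
  rw [sumElim_dotProduct_fromBlocks_transpose_mulVec] at hQ
  have ha : Aᵀ *ᵥ u ⬝ᵥ Aᵀ *ᵥ u ≤ u ⬝ᵥ (A * Aᵀ + G2) *ᵥ u := by
    have hg := hG.dotProduct_mulVec_nonneg u
    rw [star_trivial] at hg
    rw [add_mulVec, dotProduct_add, dotProduct_mul_transpose_mulVec]
    linarith
  have hb : (1 - ρ) * (u ⬝ᵥ (A * Aᵀ + G2) *ᵥ u) ≤ u ⬝ᵥ B *ᵥ u := by
    have := hB.dotProduct_mulVec_nonneg u
    simp only [sub_mulVec, dotProduct_sub, smul_mulVec, dotProduct_smul, star_trivial,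
      smul_eq_mul] at this
    linarith
  have hρ' : 0 < 1 - 2 * ρ := by linarith
  constructor
  · rw [le_div_iff₀ hρ']
    linarith [mul_le_two_mul_of_dotProduct_self_le (s := s) ha hb]
  · rw [le_div_iff₀ hρ']
    linarith [mul_dotProduct_self_le_of_dotProduct_self_le (s := s) hρ ha hb,
      mul_le_mul_of_nonneg_left hQ (by linarith : (0 : ℝ) ≤ 1 - ρ)]

/-- if `F = [[B, A],[Aᵀ, 2I_q]]` is positive definite with
`B ⪰ (1−ρ)(AAᵀ+G²)`, `AAᵀ+G² ≻ 0`, `0 ≤ ρ < 1/2`, and a vector `w = (u, s)` satisfies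
`‖F^{1/2} w‖ ≤ r` (equivalently `√(wᵀFw) ≤ r`), then
`‖(AAᵀ+G²)^{1/2} u‖² = uᵀ(AAᵀ+G²)u ≤ 2r²/(1−2ρ)` and `‖s‖² ≤ (1−ρ)r²/(1−2ρ)`. -/
theorem stmt6 {p q : ℕ} (A : Matrix (Fin p) (Fin q) ℝ)
    (B G2 : Matrix (Fin p) (Fin p) ℝ) (ρ r : ℝ)
    (u : Fin p → ℝ) (s : Fin q → ℝ)
    (hρ0 : 0 ≤ ρ) (hρ : ρ < 1 / 2) (hG : G2.PosSemidef)
    (hD : (A * Aᵀ + G2).PosDef)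
    (hB : (B - (1 - ρ) • (A * Aᵀ + G2)).PosSemidef)
    (hF : (Matrix.fromBlocks B A Aᵀ ((2:ℝ) • (1 : Matrix (Fin q) (Fin q) ℝ))).PosDef)
    (hw : Real.sqrt (Sum.elim u s ⬝ᵥ
        (Matrix.fromBlocks B A Aᵀ ((2:ℝ) • (1 : Matrix (Fin q) (Fin q) ℝ))).mulVec
          (Sum.elim u s)) ≤ r) :
    u ⬝ᵥ (A * Aᵀ + G2).mulVec u ≤ 2 * r ^ 2 / (1 - 2 * ρ) ∧
    s ⬝ᵥ s ≤ (1 - ρ) * r ^ 2 / (1 - 2 * ρ) :=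
  stmt6_general A B G2 ρ r u s hρ hG hB hw
end

section
/- Let M : ℝ^p → ℝ^q be C³, D(θ)² = ∇M(θ)∇M(θ)ᵀ, and suppose for k = 2,3 and all θ ∈ Θ°, u ∈ ℝ^p: Σ_j ⟨∇^k M_j(θ), u^{⊗k}⟩² ≤ τ^{2k−2}‖D(θ)u‖^{2k}. Fix η with ‖M(θ) − η‖ ≤ 2r₀ and set g(θ) = −½‖M(θ) − η‖². Then |⟨∇³g(θ), u^{⊗3}⟩| ≤ (3 + 2r₀τ)·τ·‖D(θ)u‖³ for all u ∈ ℝ^p and θ ∈ Θ°. -/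
/-!
Along the line `s ↦ θ + s • u`, put `ψ_j s = M (θ + s • u) j - η j`. Then
`⟨∇³g(θ), u^{⊗3}⟩` is the third derivative at `0` of `-½ Σ_j ψ_j²`, which by Leibniz is
`-Σ_j (ψ_j ψ_j''' + 3 ψ_j' ψ_j'')`. Cauchy–Schwarz bounds the first sum by
`‖M(θ) - η‖ · τ² ‖D(θ)u‖³ ≤ 2r₀τ² ‖D(θ)u‖³` and the second by `‖D(θ)u‖ · τ ‖D(θ)u‖²`.
-/

open Matrix

/-- `‖D(θ)u‖² = Σ_j ⟨∇M_j(θ), u⟩²` where `D(θ)² = ∇M(θ)∇M(θ)ᵀ`. -/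
noncomputable def Dq {p q : ℕ} (M : (Fin p → ℝ) → Fin q → ℝ)
    (θ : Fin p → ℝ) (u : Fin p → ℝ) : ℝ :=
  ∑ j, (fderiv ℝ (fun t => M t j) θ u) ^ 2

section

variable {𝕜 E F : Type*} [NontriviallyNormedField 𝕜] [NormedAddCommGroup E] [NormedSpace 𝕜 E]
  [NormedAddCommGroup F] [NormedSpace 𝕜 F]

theorem ContDiff.iteratedDeriv_comp_add_smul {n : ℕ} {f : E → F} (hf : ContDiff 𝕜 n f)
    (x y : E) (t : 𝕜) :
    iteratedDeriv n (fun s : 𝕜 => f (x + s • y)) t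
      = iteratedFDeriv 𝕜 n f (x + t • y) (fun _ => y) := by
  induction n generalizing t with
  | zero => simp
  | succ n ih =>
    rw [iteratedDeriv_succ, funext (ih (hf.of_le (by exact_mod_cast n.le_succ)))]
    exact hf.contDiffAt.deriv_fderiv_add_smul

theorem ContDiff.iteratedFDeriv_apply_const_eq_iteratedDeriv {n : ℕ} {f : E → F}
    (hf : ContDiff 𝕜 n f) (x y : E) :
    iteratedFDeriv 𝕜 n f x (fun _ => y) = iteratedDeriv n (fun s : 𝕜 => f (x + s • y)) 0 := by
  simpa using (hf.iteratedDeriv_comp_add_smul x y 0).symm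

theorem iteratedDeriv_succ_sub_const (n : ℕ) (f : 𝕜 → F) (c : F) :
    iteratedDeriv (n + 1) (fun s => f s - c) = iteratedDeriv (n + 1) f := by
  simp only [iteratedDeriv_succ']
  congr 1
  funext s
  exact deriv_sub_const c

end

theorem iteratedDeriv_three_mul_self {𝕜 : Type*} [NontriviallyNormedField 𝕜] {f : 𝕜 → 𝕜} {x : 𝕜}
    (hf : ContDiffAt 𝕜 3 f x) :
    iteratedDeriv 3 (fun s => f s * f s) x
      = 2 * (f x * iteratedDeriv 3 f x) + 6 * (deriv f x * iteratedDeriv 2 f x) := by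
  rw [iteratedDeriv_fun_mul hf hf]
  simp only [Finset.sum_range_succ, Finset.range_one, Finset.sum_singleton, Nat.choose,
    Nat.cast_one, Nat.cast_ofNat, iteratedDeriv_zero, iteratedDeriv_one, one_mul, add_zero,
    tsub_zero, tsub_self, Nat.reduceAdd, Nat.reduceSub, Nat.add_one_sub_one]
  ring

theorem abs_sum_mul_le_of_sqrt_sum_sq_le {ι : Type*} (s : Finset ι) {f g : ι → ℝ} {A B : ℝ}
    (hf : √(∑ i ∈ s, f i ^ 2) ≤ A) (hg : √(∑ i ∈ s, g i ^ 2) ≤ B) :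
    |∑ i ∈ s, f i * g i| ≤ A * B := by
  have cauchy_schwarz : |∑ i ∈ s, f i * g i| ≤ √(∑ i ∈ s, f i ^ 2) * √(∑ i ∈ s, g i ^ 2) :=
    (Real.abs_le_sqrt (Finset.sum_mul_sq_le_sq_mul_sq _ _ _)).trans_eq
      (Real.sqrt_mul (Finset.sum_nonneg fun _ _ => sq_nonneg _) _)
  exact cauchy_schwarz.trans
    (mul_le_mul hf hg (Real.sqrt_nonneg _) ((Real.sqrt_nonneg _).trans hf))

theorem iteratedFDeriv_three_neg_half_dotProduct_sub_self {E ι : Type*} [NormedAddCommGroup E]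
    [NormedSpace ℝ E] [Fintype ι] {f : E → ι → ℝ} (hf : ContDiff ℝ 3 f) (c : ι → ℝ) (x u : E) :
    iteratedFDeriv ℝ 3 (fun t => -(1/2) * ((f t - c) ⬝ᵥ (f t - c))) x (fun _ => u)
      = -∑ j, ((f x j - c j) * iteratedFDeriv ℝ 3 (fun t => f t j) x (fun _ => u)
          + 3 * (fderiv ℝ (fun t => f t j) x u
            * iteratedFDeriv ℝ 2 (fun t => f t j) x (fun _ => u))) := by
  have hfj (j : ι) : ContDiff ℝ 3 (fun t => f t j) := contDiff_pi.mp hf j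
  have hψ (j : ι) : ContDiff ℝ 3 (fun s : ℝ => f (x + s • u) j - c j) :=
    ((hfj j).comp (by fun_prop)).sub contDiff_const
  have hg : ContDiff ℝ 3 (fun t => -(1/2) * ((f t - c) ⬝ᵥ (f t - c))) := by
    unfold dotProduct; fun_prop
  have hline (j : ι) (k : ℕ) (hk : k ≤ 3) :
      iteratedFDeriv ℝ k (fun t => f t j) x (fun _ => u)
        = iteratedDeriv k (fun s : ℝ => f (x + s • u) j) 0 :=
    ((hfj j).of_le (by exact_mod_cast hk)).iteratedFDeriv_apply_const_eq_iteratedDeriv x u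
  have hsq : (fun s : ℝ => -(1/2) * ((f (x + s • u) - c) ⬝ᵥ (f (x + s • u) - c)))
      = fun s => -(1/2) * ∑ j, (f (x + s • u) j - c j) * (f (x + s • u) j - c j) := rfl
  rw [hg.iteratedFDeriv_apply_const_eq_iteratedDeriv, hsq,
    iteratedDeriv_const_mul _ (ContDiff.contDiffAt (by fun_prop)),
    iteratedDeriv_fun_sum (f := fun j s => (f (x + s • u) j - c j) * (f (x + s • u) j - c j))
      fun j _ => ((hψ j).mul (hψ j)).contDiffAt, Finset.mul_sum, ← Finset.sum_neg_distrib]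
  refine Finset.sum_congr rfl fun j _ => ?_
  rw [iteratedDeriv_three_mul_self (hψ j).contDiffAt, iteratedDeriv_succ_sub_const 2,
    iteratedDeriv_succ_sub_const 1, deriv_sub_const, hline j 3 le_rfl, hline j 2 (by norm_num),
    ← iteratedFDeriv_one_apply (fun _ => u), hline j 1 (by norm_num), iteratedDeriv_one]
  simp only [zero_smul, add_zero]
  ring

theorem stmt7_general {p q : ℕ} (M : (Fin p → ℝ) → Fin q → ℝ) (Θ : Set (Fin p → ℝ))
    (τ r₀ : ℝ) (η : Fin q → ℝ)
    (hM : ContDiff ℝ 3 M) (hτ : 0 ≤ τ)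
    (hk2 : ∀ θ ∈ Θ, ∀ u : Fin p → ℝ,
      ∑ j, (iteratedFDeriv ℝ 2 (fun t => M t j) θ ![u, u]) ^ 2
        ≤ τ ^ 2 * Dq M θ u ^ 2)
    (hk3 : ∀ θ ∈ Θ, ∀ u : Fin p → ℝ,
      ∑ j, (iteratedFDeriv ℝ 3 (fun t => M t j) θ ![u, u, u]) ^ 2
        ≤ τ ^ 4 * Dq M θ u ^ 3)
    (hη : ∀ θ ∈ Θ, Real.sqrt ((M θ - η) ⬝ᵥ (M θ - η)) ≤ 2 * r₀) :
    ∀ θ ∈ Θ, ∀ u : Fin p → ℝ,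
      |iteratedFDeriv ℝ 3 (fun t => -(1/2) * ((M t - η) ⬝ᵥ (M t - η))) θ ![u, u, u]|
        ≤ (3 + 2 * r₀ * τ) * τ * Real.sqrt (Dq M θ u) ^ 3 := by
  intro θ hθ u
  have hu2 : ![u, u] = fun _ => u := by ext i; fin_cases i <;> rfl
  have hu3 : ![u, u, u] = fun _ => u := by ext i; fin_cases i <;> rfl
  set S := √(Dq M θ u)
  have hS : S ^ 2 = Dq M θ u := Real.sq_sqrt (Finset.sum_nonneg fun _ _ => sq_nonneg _)
  have hres : √(∑ j, (M θ j - η j) ^ 2) ≤ 2 * r₀ := by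
    simpa only [dotProduct, sq, Pi.sub_apply] using hη θ hθ
  have h3 : √(∑ j, (iteratedFDeriv ℝ 3 (fun t => M t j) θ (fun _ => u)) ^ 2) ≤ τ ^ 2 * S ^ 3 :=
    Real.sqrt_le_iff.mpr ⟨by positivity, by
      calc _ ≤ τ ^ 4 * Dq M θ u ^ 3 := hu3 ▸ hk3 θ hθ u
        _ = (τ ^ 2 * S ^ 3) ^ 2 := by rw [← hS]; ring⟩
  have h2 : √(∑ j, (iteratedFDeriv ℝ 2 (fun t => M t j) θ (fun _ => u)) ^ 2) ≤ τ * S ^ 2 :=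
    Real.sqrt_le_iff.mpr ⟨by positivity, by
      calc _ ≤ τ ^ 2 * Dq M θ u ^ 2 := hu2 ▸ hk2 θ hθ u
        _ = (τ * S ^ 2) ^ 2 := by rw [← hS]; ring⟩
  rw [hu3, iteratedFDeriv_three_neg_half_dotProduct_sub_self hM η θ u, abs_neg,
    Finset.sum_add_distrib, ← Finset.mul_sum]
  calc _ ≤ |∑ j, (M θ j - η j) * iteratedFDeriv ℝ 3 (fun t => M t j) θ (fun _ => u)|
        + 3 * |∑ j, fderiv ℝ (fun t => M t j) θ u
          * iteratedFDeriv ℝ 2 (fun t => M t j) θ (fun _ => u)| := by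
        grw [abs_add_le, abs_mul, Nat.abs_ofNat]
    _ ≤ 2 * r₀ * (τ ^ 2 * S ^ 3) + 3 * (S * (τ * S ^ 2)) := by
        gcongr
        · exact abs_sum_mul_le_of_sqrt_sum_sq_le _ hres h3
        · exact abs_sum_mul_le_of_sqrt_sum_sq_le _ le_rfl h2
    _ = (3 + 2 * r₀ * τ) * τ * S ^ 3 := by ring

/-- under the `k = 2, 3` tensor bounds on `Θ°` and `‖M(θ) − η‖ ≤ 2r₀`,
the function `g(θ) = −½‖M(θ) − η‖²` satisfies
`|⟨∇³g(θ), u⊗u⊗u⟩| ≤ (3 + 2r₀τ)·τ·‖D(θ)u‖³` on `Θ°`. -/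
theorem stmt7 {p q : ℕ} (M : (Fin p → ℝ) → Fin q → ℝ) (Θ : Set (Fin p → ℝ))
    (τ r₀ : ℝ) (η : Fin q → ℝ)
    (hM : ContDiff ℝ 3 M) (hτ : 0 ≤ τ) (hr : 0 ≤ r₀)
    (hk2 : ∀ θ ∈ Θ, ∀ u : Fin p → ℝ,
      ∑ j, (iteratedFDeriv ℝ 2 (fun t => M t j) θ ![u, u]) ^ 2
        ≤ τ ^ 2 * Dq M θ u ^ 2)
    (hk3 : ∀ θ ∈ Θ, ∀ u : Fin p → ℝ,
      ∑ j, (iteratedFDeriv ℝ 3 (fun t => M t j) θ ![u, u, u]) ^ 2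
        ≤ τ ^ 4 * Dq M θ u ^ 3)
    (hη : ∀ θ ∈ Θ, Real.sqrt ((M θ - η) ⬝ᵥ (M θ - η)) ≤ 2 * r₀) :
    ∀ θ ∈ Θ, ∀ u : Fin p → ℝ,
      |iteratedFDeriv ℝ 3 (fun t => -(1/2) * ((M t - η) ⬝ᵥ (M t - η))) θ ![u, u, u]|
        ≤ (3 + 2 * r₀ * τ) * τ * Real.sqrt (Dq M θ u) ^ 3 :=
  stmt7_general M Θ τ r₀ η hM hτ hk2 hk3 hη
end

section
/- Let g(θ,η) = −½‖M(θ) − η‖² on ℝ^p × ℝ^q with M C³, and assume the k = 2,3 tensor bounds Σ_j⟨∇^k M_j(θ), u^{⊗k}⟩² ≤ τ^{2k−2}‖D(θ)u‖^{2k} and ‖M(θ)−η‖ ≤ 2r₀ with ρ = 2r₀τ. Then for every w = (u, s) ∈ ℝ^p × ℝ^q: |⟨∇³g(θ,η), w^{⊗3}⟩| ≤ (3+ρ)τ‖D(θ)u‖³ + 3τ‖s‖·‖D(θ)u‖². -/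
/-!
Restricted to the line `t ↦ (θ, η) + t (u, s)`, `g` becomes `-½ Σ_j h_j(t)²` with
`h_j(t) = M_j(θ + t u) - η_j - t s_j`, so by Leibniz the third derivative is
`-Σ_j (h_j h_j''' + 3 h_j' h_j'')(0)`. As `h_j` differs from `t ↦ M_j(θ + t u)` by an affine
function, `h_j'''(0)` and `h_j''(0)` are `⟨∇³M_j(θ), u^{⊗3}⟩` and `⟨∇²M_j(θ), u^{⊗2}⟩`, while
`h_j'(0) = ⟨∇M_j(θ), u⟩ - s_j`. Cauchy–Schwarz in `j`, the two tensor bounds and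
`‖M(θ) - η‖ ≤ 2r₀` then bound the three sums by `2r₀τ²‖D(θ)u‖³`, `3τ‖D(θ)u‖³` and `3τ‖s‖‖D(θ)u‖²`.
-/

open Matrix

section
variable {𝕜 : Type*} [NontriviallyNormedField 𝕜]

theorem iteratedDeriv_three_sq {f : 𝕜 → 𝕜} {x : 𝕜} (hf : ContDiffAt 𝕜 3 f x) :
    iteratedDeriv 3 (fun t => f t ^ 2) x
      = 2 * (f x * iteratedDeriv 3 f x + 3 * deriv f x * iteratedDeriv 2 f x) := by
  simp only [sq]
  rw [iteratedDeriv_fun_mul hf hf]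
  simp only [Finset.sum_range_succ, Finset.range_zero, Finset.sum_empty, iteratedDeriv_zero,
    iteratedDeriv_one]
  norm_num [Nat.choose]
  ring

theorem iteratedDeriv_sub_affine {n : ℕ} {f : 𝕜 → 𝕜} {x : 𝕜} (hf : ContDiffAt 𝕜 n f x)
    (hn : 2 ≤ n) (a b : 𝕜) :
    iteratedDeriv n (fun t => f t - (a + t * b)) x = iteratedDeriv n f x := by
  have haff : ContDiffAt 𝕜 n (fun t => a + t * b) x := by fun_prop
  rw [iteratedDeriv_fun_sub hf haff, iteratedDeriv_const_add (by omega),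
    iteratedDeriv_mul_const_field, iteratedDeriv_fun_id, if_neg (by omega), if_neg (by omega),
    zero_mul, sub_zero]

theorem iteratedDeriv_three_sq_sub_affine {f : 𝕜 → 𝕜} {x : 𝕜} (hf : ContDiffAt 𝕜 3 f x)
    (a b : 𝕜) :
    iteratedDeriv 3 (fun t => (f t - (a + t * b)) ^ 2) x
      = 2 * ((f x - (a + x * b)) * iteratedDeriv 3 f x
          + 3 * (deriv f x - b) * iteratedDeriv 2 f x) := by
  have hres : ContDiffAt 𝕜 3 (fun t => f t - (a + t * b)) x := hf.sub (by fun_prop)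
  have hderiv : deriv (fun t => f t - (a + t * b)) x = deriv f x - b := by
    simp [hf.differentiableAt (by norm_num)]
  rw [iteratedDeriv_three_sq hres, iteratedDeriv_sub_affine (n := 3) hf (by norm_num),
    iteratedDeriv_sub_affine (n := 2) (hf.of_le (by norm_num)) le_rfl, hderiv]

variable {E F : Type*} [NormedAddCommGroup E] [NormedSpace 𝕜 E] [NormedAddCommGroup F]
  [NormedSpace 𝕜 F]

theorem iteratedFDeriv_apply_const_eq_iteratedDeriv_line {n : ℕ} {f : E → F}
    (hf : ContDiff 𝕜 n f) (x w : E) :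
    iteratedFDeriv 𝕜 n f x (fun _ => w) = iteratedDeriv n (fun t : 𝕜 => f (x + t • w)) 0 := by
  have hline : (fun t : 𝕜 => f (x + t • w))
      = (fun y => f (x + y)) ∘ ContinuousLinearMap.toSpanSingleton 𝕜 w := rfl
  have hshift : ContDiff 𝕜 n (fun y => f (x + y)) := hf.comp (contDiff_const.add contDiff_id)
  rw [iteratedDeriv_eq_iteratedFDeriv, hline,
    ContinuousLinearMap.iteratedFDeriv_comp_right _ hshift _ le_rfl,
    iteratedFDeriv_comp_add_left]
  simp

end

theorem abs_sum_mul_le_sqrt_mul_sqrt {ι : Type*} (s : Finset ι) (f g : ι → ℝ) :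
    |∑ i ∈ s, f i * g i| ≤ √(∑ i ∈ s, f i ^ 2) * √(∑ i ∈ s, g i ^ 2) := by
  rw [← Real.sqrt_sq_eq_abs, ← Real.sqrt_mul (by positivity)]
  exact Real.sqrt_le_sqrt (Finset.sum_mul_sq_le_sq_mul_sq _ _ _)

section
variable {E : Type*} [NormedAddCommGroup E] [NormedSpace ℝ E] {ι : Type*} [Fintype ι]

theorem iteratedFDeriv_three_neg_half_sqNorm_sub_apply {M : E → ι → ℝ} (hM : ContDiff ℝ 3 M)
    (θ u : E) (η s : ι → ℝ) :
    iteratedFDeriv ℝ 3 (fun x : E × (ι → ℝ) => -(1/2) * ((M x.1 - x.2) ⬝ᵥ (M x.1 - x.2)))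
        (θ, η) (fun _ => (u, s))
      = -∑ j, ((M θ j - η j) * iteratedFDeriv ℝ 3 (fun z => M z j) θ (fun _ => u)
          + 3 * (fderiv ℝ (fun z => M z j) θ u - s j)
            * iteratedFDeriv ℝ 2 (fun z => M z j) θ (fun _ => u)) := by
  have hMj : ∀ j, ContDiff ℝ 3 (fun z => M z j) := contDiff_pi.mp hM
  have hg : ContDiff ℝ 3 (fun x : E × (ι → ℝ) => -(1/2) * ((M x.1 - x.2) ⬝ᵥ (M x.1 - x.2))) := by
    simp only [dotProduct]
    fun_prop
  set φ : ι → ℝ → ℝ := fun j t => M (θ + t • u) j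
  have hφ : ∀ j, ContDiff ℝ 3 (φ j) := fun j => (hMj j).comp (by fun_prop)
  have hφ_deriv : ∀ j, deriv (φ j) 0 = fderiv ℝ (fun z => M z j) θ u := fun j => by
    rw [← iteratedDeriv_one, ← iteratedFDeriv_apply_const_eq_iteratedDeriv_line
      ((hMj j).of_le (by norm_num)), iteratedFDeriv_one_apply]
  have hφ_iter : ∀ j, ∀ k ≤ 3,
      iteratedDeriv k (φ j) 0 = iteratedFDeriv ℝ k (fun z => M z j) θ (fun _ => u) :=
    fun j k hk => (iteratedFDeriv_apply_const_eq_iteratedDeriv_line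
      ((hMj j).of_le (by exact_mod_cast hk)) θ u).symm
  have hline : (fun t : ℝ =>
        -(1/2) * ((M (θ + t • u) - (η + t • s)) ⬝ᵥ (M (θ + t • u) - (η + t • s))))
      = fun t => -(1/2) * ∑ j, (φ j t - (η j + t * s j)) ^ 2 := by
    funext t; simp [dotProduct, sq, φ]
  have hsq : ∀ j, ContDiffAt ℝ 3 (fun t => (φ j t - (η j + t * s j)) ^ 2) 0 :=
    fun j => (((hφ j).sub (by fun_prop)).pow 2).contDiffAt
  rw [iteratedFDeriv_apply_const_eq_iteratedDeriv_line hg]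
  simp only [Prod.fst_add, Prod.snd_add, Prod.smul_fst, Prod.smul_snd]
  rw [hline, iteratedDeriv_const_mul_field, iteratedDeriv_fun_sum (fun j _ => hsq j),
    Finset.mul_sum, ← Finset.sum_neg_distrib]
  refine Finset.sum_congr rfl fun j _ => ?_
  rw [iteratedDeriv_three_sq_sub_affine (hφ j).contDiffAt, hφ_deriv, hφ_iter j 3 le_rfl,
    hφ_iter j 2 (by norm_num)]
  simp only [φ, zero_smul, add_zero, zero_mul]
  ring
end

theorem abs_sum_residual_cubic_le {ι : Type*} [Fintype ι] {r d s A B : ι → ℝ} {τ R : ℝ}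
    (hτ : 0 ≤ τ) (hr : √(∑ j, r j ^ 2) ≤ R)
    (hA : ∑ j, A j ^ 2 ≤ τ ^ 4 * (∑ j, d j ^ 2) ^ 3)
    (hB : ∑ j, B j ^ 2 ≤ τ ^ 2 * (∑ j, d j ^ 2) ^ 2) :
    |∑ j, (r j * A j + 3 * (d j - s j) * B j)|
      ≤ (3 + R * τ) * τ * √(∑ j, d j ^ 2) ^ 3 + 3 * τ * √(∑ j, s j ^ 2) * ∑ j, d j ^ 2 := by
  set σ := √(∑ j, d j ^ 2)
  have hσ : σ ^ 2 = ∑ j, d j ^ 2 := Real.sq_sqrt (by positivity)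
  rw [← hσ] at hA hB ⊢
  have hA' : √(∑ j, A j ^ 2) ≤ τ ^ 2 * σ ^ 3 :=
    (Real.sqrt_le_left (by positivity)).2 (hA.trans_eq (by ring))
  have hB' : √(∑ j, B j ^ 2) ≤ τ * σ ^ 2 :=
    (Real.sqrt_le_left (by positivity)).2 (hB.trans_eq (by ring))
  have hrA : |∑ j, r j * A j| ≤ R * (τ ^ 2 * σ ^ 3) :=
    (abs_sum_mul_le_sqrt_mul_sqrt _ _ _).trans
      (mul_le_mul hr hA' (Real.sqrt_nonneg _) ((Real.sqrt_nonneg _).trans hr))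
  have hdB : |∑ j, d j * B j| ≤ σ * (τ * σ ^ 2) :=
    (abs_sum_mul_le_sqrt_mul_sqrt _ _ _).trans (mul_le_mul_of_nonneg_left hB' (Real.sqrt_nonneg _))
  have hsB : |∑ j, s j * B j| ≤ √(∑ j, s j ^ 2) * (τ * σ ^ 2) :=
    (abs_sum_mul_le_sqrt_mul_sqrt _ _ _).trans (mul_le_mul_of_nonneg_left hB' (Real.sqrt_nonneg _))
  have hsplit : ∑ j, (r j * A j + 3 * (d j - s j) * B j)
      = ∑ j, r j * A j + 3 * ∑ j, d j * B j - 3 * ∑ j, s j * B j := by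
    simp only [Finset.mul_sum, ← Finset.sum_add_distrib, ← Finset.sum_sub_distrib]
    exact Finset.sum_congr rfl fun j _ => by ring
  rw [hsplit, abs_le]
  constructor <;> linarith [abs_le.mp hrA, abs_le.mp hdB, abs_le.mp hsB]

theorem stmt9_general {p q : ℕ} (M : (Fin p → ℝ) → Fin q → ℝ) (Θ : Set (Fin p → ℝ))
    (τ r₀ ρ : ℝ) (θ : Fin p → ℝ) (η : Fin q → ℝ)
    (hM : ContDiff ℝ 3 M) (hτ : 0 ≤ τ) (hρ : ρ = 2 * r₀ * τ)
    (hθ : θ ∈ Θ)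
    (hk2 : ∀ t ∈ Θ, ∀ u : Fin p → ℝ,
      ∑ j, (iteratedFDeriv ℝ 2 (fun z => M z j) t ![u, u]) ^ 2
        ≤ τ ^ 2 * Dq M t u ^ 2)
    (hk3 : ∀ t ∈ Θ, ∀ u : Fin p → ℝ,
      ∑ j, (iteratedFDeriv ℝ 3 (fun z => M z j) t ![u, u, u]) ^ 2
        ≤ τ ^ 4 * Dq M t u ^ 3)
    (hη : Real.sqrt ((M θ - η) ⬝ᵥ (M θ - η)) ≤ 2 * r₀) :
    ∀ (u : Fin p → ℝ) (s : Fin q → ℝ),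
      |iteratedFDeriv ℝ 3
          (fun x : (Fin p → ℝ) × (Fin q → ℝ) => -(1/2) * ((M x.1 - x.2) ⬝ᵥ (M x.1 - x.2)))
          (θ, η) ![(u, s), (u, s), (u, s)]|
        ≤ (3 + ρ) * τ * Real.sqrt (Dq M θ u) ^ 3
          + 3 * τ * Real.sqrt (s ⬝ᵥ s) * Dq M θ u := by
  intro u s
  have hw : ![(u, s), (u, s), (u, s)] = fun _ => (u, s) := by funext i; fin_cases i <;> rfl
  have hu3 : ![u, u, u] = fun _ => u := by funext i; fin_cases i <;> rfl
  have hu2 : ![u, u] = fun _ => u := by funext i; fin_cases i <;> rfl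
  have hdot : ∀ v : Fin q → ℝ, v ⬝ᵥ v = ∑ j, v j ^ 2 := fun v => by simp only [dotProduct, sq]
  have hA := hk3 θ hθ u
  have hB := hk2 θ hθ u
  rw [hu3] at hA
  rw [hu2] at hB
  simp only [hdot, Pi.sub_apply] at hη
  rw [hw, iteratedFDeriv_three_neg_half_sqNorm_sub_apply hM, abs_neg, hρ, hdot]
  exact abs_sum_residual_cubic_le hτ hη hA hB

/-- for `g(θ,η) = −½‖M(θ) − η‖²` on `ℝ^p × ℝ^q`, under the `k = 2, 3`
tensor bounds on `Θ°`, `‖M(θ) − η‖ ≤ 2r₀` and `ρ = 2r₀τ`, one has for every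
`w = (u, s)`: `|⟨∇³g(θ,η), w^{⊗3}⟩| ≤ (3+ρ)τ‖D(θ)u‖³ + 3τ‖s‖‖D(θ)u‖²`. -/
theorem stmt9 {p q : ℕ} (M : (Fin p → ℝ) → Fin q → ℝ) (Θ : Set (Fin p → ℝ))
    (τ r₀ ρ : ℝ) (θ : Fin p → ℝ) (η : Fin q → ℝ)
    (hM : ContDiff ℝ 3 M) (hτ : 0 ≤ τ) (hr : 0 ≤ r₀) (hρ : ρ = 2 * r₀ * τ)
    (hθ : θ ∈ Θ)
    (hk2 : ∀ t ∈ Θ, ∀ u : Fin p → ℝ,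
      ∑ j, (iteratedFDeriv ℝ 2 (fun z => M z j) t ![u, u]) ^ 2
        ≤ τ ^ 2 * Dq M t u ^ 2)
    (hk3 : ∀ t ∈ Θ, ∀ u : Fin p → ℝ,
      ∑ j, (iteratedFDeriv ℝ 3 (fun z => M z j) t ![u, u, u]) ^ 2
        ≤ τ ^ 4 * Dq M t u ^ 3)
    (hη : Real.sqrt ((M θ - η) ⬝ᵥ (M θ - η)) ≤ 2 * r₀) :
    ∀ (u : Fin p → ℝ) (s : Fin q → ℝ),
      |iteratedFDeriv ℝ 3
          (fun x : (Fin p → ℝ) × (Fin q → ℝ) => -(1/2) * ((M x.1 - x.2) ⬝ᵥ (M x.1 - x.2)))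
          (θ, η) ![(u, s), (u, s), (u, s)]|
        ≤ (3 + ρ) * τ * Real.sqrt (Dq M θ u) ^ 3
          + 3 * τ * Real.sqrt (s ⬝ᵥ s) * Dq M θ u :=
  stmt9_general M Θ τ r₀ ρ θ η hM hτ hρ hθ hk2 hk3 hη
end

section
/- Let w ↦ p_w := σ² tr(AᵀA (AᵀA + wG₀²)⁻¹) for a q×p matrix A, positive definite p×p matrix G₀², and σ, w > 0. Then p_w is non-increasing in w; consequently, for any constant C₀ > 0, the set {w > 0 : w ≤ C₀ p_w} is an interval of the form (0, w*] (possibly empty), i.e. if w ≤ C₀p_w and 0 < w' ≤ w then w' ≤ C₀ p_{w'}. -/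
/-!
For `0 < w' ≤ w` the matrices `X = AᵀA + w'G₀²` and `Y = AᵀA + wG₀²` satisfy `0 < X ≤ Y` in the
Loewner order, so `Y⁻¹ ≤ X⁻¹`; and `Z ↦ tr(AᵀA Z) = tr(A Z Aᵀ)` is monotone in the Loewner order.
Hence `p_w ≤ p_{w'}`, and then `w' ≤ w ≤ C₀ p_w ≤ C₀ p_{w'}`.
-/

open Matrix

/-- The effective dimension `p_w = σ² tr(AᵀA (AᵀA + wG₀²)⁻¹)`. -/
noncomputable def effDim {p q : ℕ} (σ : ℝ) (A : Matrix (Fin q) (Fin p) ℝ)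
    (G0 : Matrix (Fin p) (Fin p) ℝ) (w : ℝ) : ℝ :=
  σ ^ 2 * ((Aᵀ * A) * (Aᵀ * A + w • G0)⁻¹).trace

namespace Matrix

variable {m n : Type*} [Fintype m] [Fintype n]

/-- With `D = Y - X`, `X⁻¹ - Y⁻¹ = Y⁻¹ D Y⁻¹ + (D Y⁻¹)ᴴ X⁻¹ (D Y⁻¹)`, a sum of congruences of
positive semidefinite matrices. -/
theorem PosDef.posSemidef_inv_sub_inv [DecidableEq n] {K : Type*} [Field K] [PartialOrder K]
    [StarRing K] [AddLeftMono K] {X Y : Matrix n n K} (hX : X.PosDef)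
    (hXY : (Y - X).PosSemidef) : (X⁻¹ - Y⁻¹).PosSemidef := by
  set D := Y - X
  have hY : Y.PosDef := by simpa [D] using hX.add_posSemidef hXY
  have hYinv : Y⁻¹ᴴ = Y⁻¹ := hY.inv.isHermitian.eq
  have hDY : (D * Y⁻¹)ᴴ = Y⁻¹ * D := by
    rw [conjTranspose_mul, hYinv, hXY.isHermitian.eq]
  have hsplit : X⁻¹ - Y⁻¹ = Y⁻¹ᴴ * D * Y⁻¹ + (D * Y⁻¹)ᴴ * X⁻¹ * (D * Y⁻¹) := by
    have hXd := (isUnit_iff_isUnit_det X).mp hX.isUnit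
    have hYd := (isUnit_iff_isUnit_det Y).mp hY.isUnit
    rw [hYinv, hDY]
    simp only [D, mul_sub, sub_mul, ← Matrix.mul_assoc, nonsing_inv_mul _ hXd,
      nonsing_inv_mul _ hYd, mul_nonsing_inv_cancel_right _ _ hXd,
      mul_nonsing_inv_cancel_right _ _ hYd, Matrix.one_mul]
    abel
  rw [hsplit]
  exact (hXY.conjTranspose_mul_mul_same _).add (hX.inv.posSemidef.conjTranspose_mul_mul_same _)

theorem trace_conjTranspose_mul_self_mul_le {R : Type*} [CommRing R] [PartialOrder R]
    [StarRing R] [AddLeftMono R] (B : Matrix m n R) {X Y : Matrix n n R}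
    (hXY : (Y - X).PosSemidef) : (Bᴴ * B * X).trace ≤ (Bᴴ * B * Y).trace := by
  have hcycle (Z : Matrix n n R) : (Bᴴ * B * Z).trace = (B * Z * Bᴴ).trace := by
    rw [Matrix.mul_assoc, trace_mul_comm]
  rw [hcycle, hcycle, ← sub_nonneg, ← trace_sub, ← Matrix.sub_mul, ← Matrix.mul_sub]
  exact (hXY.mul_mul_conjTranspose_same B).trace_nonneg

end Matrix

theorem effDim_antitoneOn {p q : ℕ} (σ : ℝ) (A : Matrix (Fin q) (Fin p) ℝ)
    {G0 : Matrix (Fin p) (Fin p) ℝ} (hG0 : G0.PosDef) :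
    AntitoneOn (effDim σ A G0) (Set.Ioi 0) := by
  intro w' hw' w _ hle
  rw [effDim, effDim, ← conjTranspose_eq_transpose_of_trivial]
  have hpd : (Aᴴ * A + w' • G0).PosDef :=
    PosDef.posSemidef_add (posSemidef_conjTranspose_mul_self A) (hG0.smul hw')
  have hgap : (Aᴴ * A + w • G0 - (Aᴴ * A + w' • G0)).PosSemidef := by
    rw [add_sub_add_left_eq_sub, ← sub_smul]
    exact hG0.posSemidef.smul (sub_nonneg.mpr hle)
  exact mul_le_mul_of_nonneg_left
    (trace_conjTranspose_mul_self_mul_le A (hpd.posSemidef_inv_sub_inv hgap)) (sq_nonneg σ)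

theorem stmt18_general {p q : ℕ} (σ : ℝ) (A : Matrix (Fin q) (Fin p) ℝ)
    (G0 : Matrix (Fin p) (Fin p) ℝ) (hG0 : G0.PosDef) :
    (∀ w w' : ℝ, 0 < w' → w' ≤ w → effDim σ A G0 w ≤ effDim σ A G0 w') ∧
    (∀ C₀ : ℝ, 0 < C₀ → ∀ w w' : ℝ, 0 < w' → w' ≤ w →
      w ≤ C₀ * effDim σ A G0 w → w' ≤ C₀ * effDim σ A G0 w') := by
  have hanti : ∀ w w' : ℝ, 0 < w' → w' ≤ w → effDim σ A G0 w ≤ effDim σ A G0 w' :=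
    fun w w' hw' hle ↦ effDim_antitoneOn σ A hG0 hw' (hw'.trans_le hle) hle
  refine ⟨hanti, fun C₀ hC₀ w w' hw' hle hw ↦ ?_⟩
  calc w' ≤ w := hle
    _ ≤ C₀ * effDim σ A G0 w := hw
    _ ≤ C₀ * effDim σ A G0 w' := mul_le_mul_of_nonneg_left (hanti w w' hw' hle) hC₀.le

/-- `w ↦ p_w` is non-increasing on `(0,∞)`; consequently, for any `C₀ > 0`,
if `w ≤ C₀ p_w` and `0 < w' ≤ w` then `w' ≤ C₀ p_{w'}` (the set `{w > 0 : w ≤ C₀ p_w}`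
is downward closed in `(0,∞)`). -/
theorem stmt18 {p q : ℕ} (σ : ℝ) (A : Matrix (Fin q) (Fin p) ℝ)
    (G0 : Matrix (Fin p) (Fin p) ℝ) (hσ : 0 < σ) (hG0 : G0.PosDef) :
    (∀ w w' : ℝ, 0 < w' → w' ≤ w → effDim σ A G0 w ≤ effDim σ A G0 w') ∧
    (∀ C₀ : ℝ, 0 < C₀ → ∀ w w' : ℝ, 0 < w' → w' ≤ w →
      w ≤ C₀ * effDim σ A G0 w → w' ≤ C₀ * effDim σ A G0 w') :=
  stmt18_general σ A G0 hG0
end
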